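/- arXiv:2312.16819 — 2 statements merged into one kernel-verified Lean document; each statement's English description precedes it below -/
import Mathlib

section
/- Let U ⊆ ℝⁿ be open, let f : U → ℝ be C², let c ∈ U with ∇f(c) = 0, and suppose the closed ball of radius ε > 0 around c is contained in U. Suppose γ : (0,ε) → U and λ : (0,ε) → ℝ satisfy ‖γ(t) − c‖ = t, ∇f(γ(t)) = λ(t)(γ(t) − c), and f(γ(t)) = min{f(x) : ‖x − c‖ = t} for all t ∈ (0,ε), and that the limits v = lim_{t→0⁺} (γ(t) − c)/t and λ₀ = lim_{t→0⁺} λ(t) exist. Then λ₀ equals the smallest eigenvalue of the Hessian ∇²f(c), and v is a unit eigenvector of ∇²f(c) associated with its smallest eigenvalue. -/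
/-!
Write `H` for the Hessian at the critical point `c`, so that
`f x = f c + ½ ⟪H (x - c), x - c⟫ + o(‖x - c‖²)`. Dividing the tangency condition
`∇f (γ t) = λ t • (γ t - c)` by `t` and letting `t → 0⁺` gives `H v = λ₀ v`, with `‖v‖ = 1`
because `‖γ t - c‖ = t`. Comparing `f (γ t)` with `f (c + t u)` for a unit vector `u` and
dividing by `t²` gives `⟪H v, v⟫ ≤ ⟪H u, u⟫`, and `⟪H u, u⟫ = μ` when `u` is a unit
eigenvector for `μ`.
-/

open Filter Asymptotics InnerProductSpace
open scoped RealInnerProductSpace Topology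

theorem isLittleO_sub_norm_sq_of_hasFDerivAt {E F : Type*} [NormedAddCommGroup E]
    [NormedSpace ℝ E] [NormedAddCommGroup F] [NormedSpace ℝ F] {φ : E → F} {φ' : E → E →L[ℝ] F}
    {c : E} (hφ : ∀ᶠ y in 𝓝 c, HasFDerivAt φ (φ' y) y) (hφ' : φ' =o[𝓝 c] fun y => y - c) :
    (fun x => φ x - φ c) =o[𝓝 c] fun x => ‖x - c‖ ^ 2 := by
  refine isLittleO_iff.2 fun C hC => ?_
  obtain ⟨δ, hδ, hball⟩ := Metric.eventually_nhds_iff_ball.1 (hφ.and (isLittleO_iff.1 hφ' hC))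
  filter_upwards [Metric.ball_mem_nhds c hδ] with x hx
  have hsub : Metric.closedBall c ‖x - c‖ ⊆ Metric.ball c δ :=
    Metric.closedBall_subset_ball (by rwa [← dist_eq_norm, ← Metric.mem_ball])
  have hbound : ∀ y ∈ Metric.closedBall c ‖x - c‖, ‖φ' y‖ ≤ C * ‖x - c‖ := fun y hy =>
    (hball y (hsub hy)).2.trans
      (mul_le_mul_of_nonneg_left (by rwa [← dist_eq_norm, ← Metric.mem_closedBall]) hC.le)
  calc ‖φ x - φ c‖ ≤ C * ‖x - c‖ * ‖x - c‖ :=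
        (convex_closedBall c _).norm_image_sub_le_of_norm_hasFDerivWithin_le
          (fun y hy => (hball y (hsub hy)).1.hasFDerivWithinAt) hbound
          (Metric.mem_closedBall_self (norm_nonneg _)) (by simp [dist_eq_norm])
    _ = C * ‖‖x - c‖ ^ 2‖ := by rw [norm_pow, norm_norm]; ring

section Curve

variable {F : Type*} [NormedAddCommGroup F] [NormedSpace ℝ F] {γ : ℝ → F} {c v : F}

theorem tendsto_sub_of_tendsto_inv_smul_sub
    (hv : Tendsto (fun t => t⁻¹ • (γ t - c)) (𝓝[>] 0) (𝓝 v)) :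
    Tendsto (fun t => γ t - c) (𝓝[>] 0) (𝓝 0) := by
  have h := (tendsto_id.mono_left nhdsWithin_le_nhds).smul hv
  rw [zero_smul] at h
  refine h.congr' ?_
  filter_upwards [self_mem_nhdsWithin] with t (ht : 0 < t)
  exact smul_inv_smul₀ ht.ne' _

theorem norm_eq_one_of_tendsto_inv_smul_sub
    (hv : Tendsto (fun t => t⁻¹ • (γ t - c)) (𝓝[>] 0) (𝓝 v))
    (hγ : ∀ᶠ t in 𝓝[>] 0, ‖γ t - c‖ = t) : ‖v‖ = 1 := by
  refine tendsto_nhds_unique hv.norm (tendsto_const_nhds.congr' ?_)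
  filter_upwards [hγ, self_mem_nhdsWithin] with t ht (ht0 : 0 < t)
  rw [norm_smul, ht, norm_inv, Real.norm_of_nonneg ht0.le, inv_mul_cancel₀ ht0.ne']

theorem HasFDerivAt.tendsto_inv_smul_sub_comp {G : Type*} [NormedAddCommGroup G]
    [NormedSpace ℝ G] {g : F → G} {L : F →L[ℝ] G} (hg : HasFDerivAt g L c)
    (hv : Tendsto (fun t => t⁻¹ • (γ t - c)) (𝓝[>] 0) (𝓝 v)) :
    Tendsto (fun t => t⁻¹ • (g (γ t) - g c)) (𝓝[>] 0) (𝓝 (L v)) := by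
  simpa using hg.hasFDerivWithinAt (s := Set.univ).lim (tendsto_sub_of_tendsto_inv_smul_sub hv)
    (.of_forall fun _ => Set.mem_univ _) hv

end Curve

variable {E : Type*} [NormedAddCommGroup E] [InnerProductSpace ℝ E]

section Quadratic

variable {f : E → ℝ} {c v : E} {H : E →L[ℝ] E} {γ : ℝ → E}

theorem hasFDerivAt_half_inner_apply_sub_self (hH : (H : E →ₗ[ℝ] E).IsSymmetric) (c y : E) :
    HasFDerivAt (fun x => (1 / 2 : ℝ) * ⟪H (x - c), x - c⟫) (innerSL ℝ (H (y - c))) y := by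
  have h := ((hH.hasStrictFDerivAt_reApplyInnerSelf (y - c)).hasFDerivAt.comp y
    ((hasFDerivAt_id y).sub_const c)).const_mul (1 / 2 : ℝ)
  refine h.congr_fderiv ?_
  ext x
  simp

theorem inner_apply_self_eq_of_apply_eq_smul {w : E} {μ : ℝ} (h : H w = μ • w) (hw : ‖w‖ = 1) :
    ⟪H w, w⟫ = μ := by
  rw [h, real_inner_smul_left, real_inner_self_eq_norm_sq, hw, one_pow, mul_one]

theorem tendsto_div_sq_of_isLittleO_taylor_two
    (hT : (fun x => f x - f c - (1 / 2) * ⟪H (x - c), x - c⟫) =o[𝓝 c] fun x => ‖x - c‖ ^ 2)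
    (hv : Tendsto (fun t => t⁻¹ • (γ t - c)) (𝓝[>] 0) (𝓝 v)) :
    Tendsto (fun t => (f (γ t) - f c) / t ^ 2) (𝓝[>] 0) (𝓝 ((1 / 2) * ⟪H v, v⟫)) := by
  have hγ : Tendsto γ (𝓝[>] 0) (𝓝 c) :=
    tendsto_sub_nhds_zero_iff.1 (tendsto_sub_of_tendsto_inv_smul_sub hv)
  have hnorm : (fun t => ‖γ t - c‖ ^ 2) =O[𝓝[>] 0] fun t => t ^ 2 := by
    have h := (isBigO_refl (fun t : ℝ => t ^ 2) _).mul ((hv.norm.pow 2).isBigO_one ℝ)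
    simp only [mul_one] at h
    refine h.congr' ?_ (.refl _ _)
    filter_upwards [self_mem_nhdsWithin] with t (ht : 0 < t)
    rw [norm_smul, mul_pow, norm_inv, Real.norm_of_nonneg ht.le, ← mul_assoc, inv_pow,
      mul_inv_cancel₀ (by positivity), one_mul]
  have hrem := ((hT.comp_tendsto hγ).trans_isBigO hnorm).tendsto_div_nhds_zero
  have hquad : Tendsto (fun t => (1 / 2) * ⟪H (t⁻¹ • (γ t - c)), t⁻¹ • (γ t - c)⟫) (𝓝[>] 0)
      (𝓝 ((1 / 2) * ⟪H v, v⟫)) :=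
    ((continuous_const.mul (H.continuous.inner continuous_id)).tendsto v).comp hv
  refine (zero_add ((1 / 2) * ⟪H v, v⟫) ▸ hrem.add hquad).congr' ?_
  filter_upwards [self_mem_nhdsWithin] with t (ht : 0 < t)
  simp only [Function.comp_apply, map_smul, real_inner_smul_left, real_inner_smul_right]
  field_simp
  ring

theorem inner_apply_self_le_of_forall_sphere_le
    (hT : (fun x => f x - f c - (1 / 2) * ⟪H (x - c), x - c⟫) =o[𝓝 c] fun x => ‖x - c‖ ^ 2)
    (hv : Tendsto (fun t => t⁻¹ • (γ t - c)) (𝓝[>] 0) (𝓝 v))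
    (hmin : ∀ᶠ t in 𝓝[>] 0, ∀ x, ‖x - c‖ = t → f (γ t) ≤ f x) {u : E} (hu : ‖u‖ = 1) :
    ⟪H v, v⟫ ≤ ⟪H u, u⟫ := by
  have hline : Tendsto (fun t : ℝ => t⁻¹ • ((c + t • u) - c)) (𝓝[>] 0) (𝓝 u) := by
    refine tendsto_const_nhds.congr' ?_
    filter_upwards [self_mem_nhdsWithin] with t (ht : 0 < t)
    rw [add_sub_cancel_left, inv_smul_smul₀ ht.ne']
  have hle : ∀ᶠ t in 𝓝[>] (0 : ℝ),
      (f (γ t) - f c) / t ^ 2 ≤ (f (c + t • u) - f c) / t ^ 2 := by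
    filter_upwards [hmin, self_mem_nhdsWithin] with t ht (ht0 : 0 < t)
    have := ht (c + t • u)
      (by rw [add_sub_cancel_left, norm_smul, hu, mul_one, Real.norm_of_nonneg ht0.le])
    gcongr
  have := le_of_tendsto_of_tendsto (tendsto_div_sq_of_isLittleO_taylor_two hT hv)
    (tendsto_div_sq_of_isLittleO_taylor_two hT hline) hle
  linarith

end Quadratic

variable [CompleteSpace E] {f : E → ℝ} {c : E}

theorem inner_fderiv_gradient_apply (f : E → ℝ) (c a b : E) :
    ⟪fderiv ℝ (gradient f) c a, b⟫ = fderiv ℝ (fderiv ℝ f) c a b := by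
  change ⟪fderiv ℝ ((toDual ℝ E).symm ∘ fderiv ℝ f) c a, b⟫ = _
  rw [LinearIsometryEquiv.comp_fderiv]
  exact toDual_symm_apply

theorem ContDiffAt.differentiableAt_gradient (hf : ContDiffAt ℝ 2 f c) :
    DifferentiableAt ℝ (gradient f) c :=
  (toDual ℝ E).symm.comp_differentiableAt_iff.2
    ((hf.fderiv_right (m := 1) le_rfl).differentiableAt one_ne_zero)

theorem ContDiffAt.isSymmetric_fderiv_gradient (hf : ContDiffAt ℝ 2 f c) :
    (fderiv ℝ (gradient f) c : E →ₗ[ℝ] E).IsSymmetric := fun a b => by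
  rw [ContinuousLinearMap.coe_coe, inner_fderiv_gradient_apply, real_inner_comm,
    inner_fderiv_gradient_apply]
  exact hf.isSymmSndFDerivAt (by simp) a b

theorem isLittleO_taylor_two_of_gradient_eq_zero {H : E →L[ℝ] E}
    (hf : ∀ᶠ y in 𝓝 c, DifferentiableAt ℝ f y) (hH : HasFDerivAt (gradient f) H c)
    (hHsymm : (H : E →ₗ[ℝ] E).IsSymmetric) (hc : gradient f c = 0) :
    (fun x => f x - f c - (1 / 2) * ⟪H (x - c), x - c⟫) =o[𝓝 c] fun x => ‖x - c‖ ^ 2 := by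
  have hderiv : ∀ᶠ y in 𝓝 c, HasFDerivAt (fun x => f x - (1 / 2) * ⟪H (x - c), x - c⟫)
      (innerSL ℝ (gradient f y - H (y - c))) y := by
    filter_upwards [hf] with y hy
    rw [map_sub]
    exact (hasGradientAt_iff_hasFDerivAt.1 hy.hasGradientAt).sub
      (hasFDerivAt_half_inner_apply_sub_self hHsymm c y)
  have hsmall : (fun y => gradient f y - H (y - c)) =o[𝓝 c] fun y => y - c := by
    simpa [hc] using hH.isLittleO
  simpa [sub_right_comm _ (f c)] using isLittleO_sub_norm_sq_of_hasFDerivAt hderiv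
    (((innerSL ℝ : E →L[ℝ] E →L[ℝ] ℝ).isBigO_comp _ _).trans_isLittleO hsmall)

theorem apply_eq_smul_of_gradient_eq_smul {H : E →L[ℝ] E} {γ : ℝ → E} {v : E}
    {lam : ℝ → ℝ} {lam0 : ℝ} (hH : HasFDerivAt (gradient f) H c) (hc : gradient f c = 0)
    (htan : ∀ᶠ t in 𝓝[>] 0, gradient f (γ t) = lam t • (γ t - c))
    (hv : Tendsto (fun t => t⁻¹ • (γ t - c)) (𝓝[>] 0) (𝓝 v))
    (hlam : Tendsto lam (𝓝[>] 0) (𝓝 lam0)) : H v = lam0 • v := by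
  refine tendsto_nhds_unique (hH.tendsto_inv_smul_sub_comp hv) ((hlam.smul hv).congr' ?_)
  filter_upwards [htan] with t ht
  rw [hc, sub_zero, ht, smul_comm]

theorem min_tangency_arc_tangent_to_min_eigenspace_general {n : ℕ}
    (U : Set (EuclideanSpace ℝ (Fin n))) (hU : IsOpen U)
    (f : EuclideanSpace ℝ (Fin n) → ℝ) (hf : ContDiffOn ℝ 2 f U)
    (c : EuclideanSpace ℝ (Fin n)) (hc : c ∈ U) (hcrit : gradient f c = 0)
    (ε : ℝ) (hε : 0 < ε)
    (γ : ℝ → EuclideanSpace ℝ (Fin n)) (lam : ℝ → ℝ)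
    (harc : ∀ t ∈ Set.Ioo (0 : ℝ) ε, ‖γ t - c‖ = t)
    (htan : ∀ t ∈ Set.Ioo (0 : ℝ) ε, gradient f (γ t) = lam t • (γ t - c))
    (hmin : ∀ t ∈ Set.Ioo (0 : ℝ) ε, ∀ x : EuclideanSpace ℝ (Fin n),
      ‖x - c‖ = t → f (γ t) ≤ f x)
    (v : EuclideanSpace ℝ (Fin n)) (lam0 : ℝ)
    (hv : Tendsto (fun t => t⁻¹ • (γ t - c)) (nhdsWithin 0 (Set.Ioi 0)) (nhds v))
    (hlam : Tendsto lam (nhdsWithin 0 (Set.Ioi 0)) (nhds lam0)) :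
    ‖v‖ = 1 ∧ fderiv ℝ (gradient f) c v = lam0 • v ∧
      ∀ (μ : ℝ) (w : EuclideanSpace ℝ (Fin n)), w ≠ 0 →
        fderiv ℝ (gradient f) c w = μ • w → lam0 ≤ μ := by
  have hfc : ContDiffAt ℝ 2 f c := hf.contDiffAt (hU.mem_nhds hc)
  set H := fderiv ℝ (gradient f) c
  have hH : HasFDerivAt (gradient f) H c := hfc.differentiableAt_gradient.hasFDerivAt
  have hT := isLittleO_taylor_two_of_gradient_eq_zero
    ((hfc.eventually (by simp)).mono fun y hy => hy.differentiableAt two_ne_zero)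
    hH hfc.isSymmetric_fderiv_gradient hcrit
  have hIoo : ∀ᶠ t in 𝓝[>] (0 : ℝ), t ∈ Set.Ioo 0 ε := Ioo_mem_nhdsGT hε
  have hv1 : ‖v‖ = 1 := norm_eq_one_of_tendsto_inv_smul_sub hv (hIoo.mono harc)
  have hHv : H v = lam0 • v :=
    apply_eq_smul_of_gradient_eq_smul hH hcrit (hIoo.mono htan) hv hlam
  refine ⟨hv1, hHv, fun μ w hw hHw => ?_⟩
  have hu : ‖(‖w‖⁻¹ : ℝ) • w‖ = 1 := norm_smul_inv_norm hw
  calc lam0 = ⟪H v, v⟫ := (inner_apply_self_eq_of_apply_eq_smul hHv hv1).symm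
    _ ≤ ⟪H ((‖w‖⁻¹ : ℝ) • w), (‖w‖⁻¹ : ℝ) • w⟫ :=
      inner_apply_self_le_of_forall_sphere_le hT hv (hIoo.mono hmin) hu
    _ = μ := inner_apply_self_eq_of_apply_eq_smul (by rw [map_smul, hHw, smul_comm]) hu

/-- If moreover the tangency arc realizes the minimum of `f` on each
sphere of radius `t` around the critical point `c`, then the limit `λ₀` equals the
smallest eigenvalue of the Hessian `∇²f(c)` (realized as the derivative of the
gradient at `c`), and `v` is a unit eigenvector associated with it. -/
theorem min_tangency_arc_tangent_to_min_eigenspace {n : ℕ}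
    (U : Set (EuclideanSpace ℝ (Fin n))) (hU : IsOpen U)
    (f : EuclideanSpace ℝ (Fin n) → ℝ) (hf : ContDiffOn ℝ 2 f U)
    (c : EuclideanSpace ℝ (Fin n)) (hc : c ∈ U) (hcrit : gradient f c = 0)
    (ε : ℝ) (hε : 0 < ε) (hball : Metric.closedBall c ε ⊆ U)
    (γ : ℝ → EuclideanSpace ℝ (Fin n)) (lam : ℝ → ℝ)
    (hγU : ∀ t ∈ Set.Ioo (0 : ℝ) ε, γ t ∈ U)
    (harc : ∀ t ∈ Set.Ioo (0 : ℝ) ε, ‖γ t - c‖ = t)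
    (htan : ∀ t ∈ Set.Ioo (0 : ℝ) ε, gradient f (γ t) = lam t • (γ t - c))
    (hmin : ∀ t ∈ Set.Ioo (0 : ℝ) ε, ∀ x : EuclideanSpace ℝ (Fin n),
      ‖x - c‖ = t → f (γ t) ≤ f x)
    (v : EuclideanSpace ℝ (Fin n)) (lam0 : ℝ)
    (hv : Tendsto (fun t => t⁻¹ • (γ t - c)) (nhdsWithin 0 (Set.Ioi 0)) (nhds v))
    (hlam : Tendsto lam (nhdsWithin 0 (Set.Ioi 0)) (nhds lam0)) :
    ‖v‖ = 1 ∧ fderiv ℝ (gradient f) c v = lam0 • v ∧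
      ∀ (μ : ℝ) (w : EuclideanSpace ℝ (Fin n)), w ≠ 0 →
        fderiv ℝ (gradient f) c w = μ • w → lam0 ≤ μ :=
  min_tangency_arc_tangent_to_min_eigenspace_general U hU f hf c hc hcrit ε hε γ lam harc htan hmin
    v lam0 hv hlam
end

section
/- Let d ≥ 2. Let 𝔸_{d,1} be the set of d×d matrices A for which there exists x ∈ ℝᵈ with Σᵢ xᵢ = 0 such that A_{ij} = x_i − x_j for all i, j, and let 𝔸_{d,2} be the set of skew-symmetric d×d matrices all of whose row sums are zero. Then the space 𝔸_d of skew-symmetric real d×d matrices is the direct sum 𝔸_d = 𝔸_{d,1} ⊕ 𝔸_{d,2}; the two summands are orthogonal with respect to the Frobenius inner product; both are invariant under the diagonal S_d-action W ↦ P_σ W P_σᵀ; and dim 𝔸_{d,1} = d − 1 and dim 𝔸_{d,2} = (d−1)(d−2)/2. -/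
open Matrix

/-- The permutation matrix of `σ`. -/
def permMat {d : ℕ} (σ : Equiv.Perm (Fin d)) : Matrix (Fin d) (Fin d) ℝ :=
  Matrix.of fun i j => if σ j = i then (1 : ℝ) else 0

/-- The space of skew-symmetric `d × d` real matrices. -/
def skewSpace (d : ℕ) : Submodule ℝ (Matrix (Fin d) (Fin d) ℝ) where
  carrier := {A | Aᵀ = -A}
  zero_mem' := by simp
  add_mem' := by
    intro a b ha hb
    simp only [Set.mem_setOf_eq] at *
    rw [Matrix.transpose_add, ha, hb, neg_add]
  smul_mem' := by
    intro c a ha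
    simp only [Set.mem_setOf_eq] at *
    rw [Matrix.transpose_smul, ha, smul_neg]

/-- `𝔸_{d,1}`: matrices with `A i j = x i − x j` for some zero-sum `x`. -/
def Ad1 (d : ℕ) : Submodule ℝ (Matrix (Fin d) (Fin d) ℝ) where
  carrier := {A | ∃ x : Fin d → ℝ, (∑ i, x i = 0) ∧ ∀ i j, A i j = x i - x j}
  zero_mem' := ⟨0, by simp, by simp⟩
  add_mem' := by
    rintro a b ⟨x, hx0, hx⟩ ⟨y, hy0, hy⟩
    refine ⟨x + y, by simp [Finset.sum_add_distrib, hx0, hy0], fun i j => ?_⟩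
    simp [Matrix.add_apply, hx, hy]; ring
  smul_mem' := by
    rintro c a ⟨x, hx0, hx⟩
    refine ⟨c • x, by simp [← Finset.mul_sum, hx0], fun i j => ?_⟩
    simp [Matrix.smul_apply, hx]; ring

/-- `𝔸_{d,2}`: skew-symmetric matrices with all row sums zero. -/
def Ad2 (d : ℕ) : Submodule ℝ (Matrix (Fin d) (Fin d) ℝ) where
  carrier := {A | Aᵀ = -A ∧ ∀ i, ∑ j, A i j = 0}
  zero_mem' := ⟨by simp, by simp⟩
  add_mem' := by
    rintro a b ⟨ha1, ha2⟩ ⟨hb1, hb2⟩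
    refine ⟨by rw [Matrix.transpose_add, ha1, hb1, neg_add], fun i => ?_⟩
    simp [Matrix.add_apply, Finset.sum_add_distrib, ha2 i, hb2 i]
  smul_mem' := by
    rintro c a ⟨ha1, ha2⟩
    refine ⟨by rw [Matrix.transpose_smul, ha1, smul_neg], fun i => ?_⟩
    simp [Matrix.smul_apply, ← Finset.mul_sum, ha2 i]

/-! ### Auxiliary lemmas -/

lemma skew_apply {d : ℕ} {A : Matrix (Fin d) (Fin d) ℝ} (hA : Aᵀ = -A) (i j : Fin d) :
    A j i = -A i j := by
  have := congrFun (congrFun hA i) j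
  simpa using this

lemma permMat_conj_apply {d : ℕ} (σ : Equiv.Perm (Fin d)) (A : Matrix (Fin d) (Fin d) ℝ)
    (i j : Fin d) : (permMat σ * A * (permMat σ)ᵀ) i j = A (σ⁻¹ i) (σ⁻¹ j) := by
  simp only [Matrix.mul_apply, Matrix.transpose_apply, permMat, Matrix.of_apply,
    ite_mul, mul_ite, one_mul, mul_one, zero_mul, mul_zero]
  have h1 : ∀ k : Fin d, (σ k = i) = (k = σ⁻¹ i) := by
    intro k; simp [Equiv.eq_symm_apply, eq_comm, Equiv.Perm.inv_def]
  have h2 : ∀ k : Fin d, (σ k = j) = (k = σ⁻¹ j) := by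
    intro k; simp [Equiv.eq_symm_apply, eq_comm, Equiv.Perm.inv_def]
  simp only [h1, h2, Finset.sum_ite_eq', Finset.mem_univ, if_true]

/-- Column sums of a member of `Ad2` vanish. -/
lemma Ad2_col_sum {d : ℕ} {B : Matrix (Fin d) (Fin d) ℝ} (hB : B ∈ Ad2 d) (j : Fin d) :
    ∑ i, B i j = 0 := by
  obtain ⟨hB1, hB2⟩ := hB
  have : ∑ i, B i j = ∑ i, -B j i := Finset.sum_congr rfl fun i _ => by
    rw [skew_apply hB1 j i]
  rw [this]; simp [hB2 j]

/-! ### Dimension of `Ad1` -/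

noncomputable def sumL (d : ℕ) : (Fin d → ℝ) →ₗ[ℝ] ℝ := ∑ i, LinearMap.proj i

lemma sumL_apply (d : ℕ) (x : Fin d → ℝ) : sumL d x = ∑ i, x i := by
  simp [sumL]

lemma finrank_ker_sumL (d : ℕ) (hd : 1 ≤ d) :
    Module.finrank ℝ (LinearMap.ker (sumL d)) = d - 1 := by
  have hsurj : LinearMap.range (sumL d) = ⊤ := by
    rw [eq_top_iff]
    rintro r -
    refine ⟨Pi.single ⟨0, hd⟩ r, ?_⟩
    simp [sumL_apply, Pi.single_apply]
  have h := LinearMap.finrank_range_add_finrank_ker (sumL d)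
  rw [hsurj, finrank_top, Module.finrank_pi, Module.finrank_self] at h
  simp only [Fintype.card_fin] at h
  omega

noncomputable def liftL (d : ℕ) : (Fin d → ℝ) →ₗ[ℝ] Matrix (Fin d) (Fin d) ℝ where
  toFun x := Matrix.of fun i j => x i - x j
  map_add' x y := by ext i j; simp; ring
  map_smul' c x := by ext i j; simp; ring

noncomputable def toAd1 (d : ℕ) : LinearMap.ker (sumL d) →ₗ[ℝ] Ad1 d :=
  LinearMap.codRestrict (Ad1 d) ((liftL d).comp (LinearMap.ker (sumL d)).subtype)
    (fun x => ⟨x.1, by have h := x.2; rwa [LinearMap.mem_ker, sumL_apply] at h, fun i j => rfl⟩)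

lemma toAd1_bijective (d : ℕ) (hd : 1 ≤ d) : Function.Bijective (toAd1 d) := by
  constructor
  · rw [injective_iff_map_eq_zero]
    rintro ⟨x, hx⟩ h
    have h0 : ∀ i j, x i - x j = 0 := by
      intro i j
      have := congrArg Subtype.val h
      exact congrFun (congrFun this i) j
    have hx0 : ∑ i, x i = 0 := by simpa [LinearMap.mem_ker, sumL_apply] using hx
    ext i
    have : ∑ j, x j = (d : ℝ) * x i := by
      rw [Finset.sum_congr rfl fun j _ => (by linarith [h0 i j] : x j = x i)]
      simp [Finset.sum_const, mul_comm]
    have hd' : (d : ℝ) ≠ 0 := by positivity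
    have := this.symm.trans hx0
    simpa [hd'] using mul_eq_zero.mp this
  · rintro ⟨A, x, hx0, hx⟩
    refine ⟨⟨x, by simpa [LinearMap.mem_ker, sumL_apply] using hx0⟩, ?_⟩
    ext i j
    exact (hx i j).symm

lemma finrank_Ad1 (d : ℕ) (hd : 1 ≤ d) : Module.finrank ℝ (Ad1 d) = d - 1 := by
  rw [← finrank_ker_sumL d hd]
  exact (LinearEquiv.ofBijective (toAd1 d) (toAd1_bijective d hd)).symm.finrank_eq

/-! ### Dimension of the skew space -/

noncomputable def skewFromFun (d : ℕ) :
    ({p : Fin d × Fin d // p.2 < p.1} → ℝ) →ₗ[ℝ] Matrix (Fin d) (Fin d) ℝ where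
  toFun f := Matrix.of fun i j =>
    if h : j < i then f ⟨(i, j), h⟩ else if h' : i < j then -f ⟨(j, i), h'⟩ else 0
  map_add' f g := by ext i j; simp only [Matrix.of_apply, Matrix.add_apply, Pi.add_apply]
                     split_ifs <;> ring
  map_smul' c f := by ext i j
                      simp only [Matrix.of_apply, Matrix.smul_apply, Pi.smul_apply,
                        RingHom.id_apply, smul_eq_mul]
                      split_ifs <;> ring

lemma skewFromFun_mem (d : ℕ) (f : {p : Fin d × Fin d // p.2 < p.1} → ℝ) :
    skewFromFun d f ∈ skewSpace d := by
  show (skewFromFun d f)ᵀ = -(skewFromFun d f)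
  ext i j
  simp only [Matrix.transpose_apply, Matrix.neg_apply, skewFromFun, LinearMap.coe_mk,
    AddHom.coe_mk, Matrix.of_apply]
  rcases lt_trichotomy i j with h | h | h
  · rw [dif_pos h, dif_neg (not_lt.mpr h.le), dif_pos h]; ring
  · subst h; simp
  · rw [dif_pos h, dif_neg (not_lt.mpr h.le), dif_pos h]

noncomputable def toSkew (d : ℕ) : ({p : Fin d × Fin d // p.2 < p.1} → ℝ) →ₗ[ℝ] skewSpace d :=
  LinearMap.codRestrict (skewSpace d) (skewFromFun d) (skewFromFun_mem d)

lemma toSkew_bijective (d : ℕ) : Function.Bijective (toSkew d) := by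
  constructor
  · rw [injective_iff_map_eq_zero]
    intro f h
    have h' := congrArg Subtype.val h
    ext ⟨⟨i, j⟩, hij⟩
    have := congrFun (congrFun h' i) j
    simpa [toSkew, skewFromFun, LinearMap.codRestrict, dif_pos hij] using this
  · rintro ⟨A, hA⟩
    have hA' : Aᵀ = -A := hA
    refine ⟨fun p => A p.1.1 p.1.2, ?_⟩
    ext i j
    simp only [toSkew, LinearMap.codRestrict, skewFromFun, LinearMap.coe_mk, AddHom.coe_mk,
      Matrix.of_apply]
    rcases lt_trichotomy i j with h | h | h
    · rw [dif_neg (not_lt.mpr h.le), dif_pos h]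
      have := skew_apply hA' i j
      linarith
    · subst h
      have : A i i = -A i i := skew_apply hA' i i
      simp only [lt_irrefl, dif_neg, not_false_iff]
      linarith
    · rw [dif_pos h]

noncomputable def pairEquiv (d : ℕ) : {p : Fin d × Fin d // p.2 < p.1} ≃ (Σ i : Fin d, Fin i.1) where
  toFun p := ⟨p.1.1, ⟨p.1.2.1, p.2⟩⟩
  invFun q := ⟨(q.1, ⟨q.2.1, lt_trans q.2.2 q.1.2⟩), q.2.2⟩
  left_inv p := by ext <;> rfl
  right_inv q := by ext <;> rfl

lemma finrank_skew (d : ℕ) : Module.finrank ℝ (skewSpace d) = d * (d - 1) / 2 := by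
  rw [← (LinearEquiv.ofBijective (toSkew d) (toSkew_bijective d)).finrank_eq,
    Module.finrank_pi, Fintype.card_congr (pairEquiv d), Fintype.card_sigma]
  simp only [Fintype.card_fin]
  rw [Fin.sum_univ_eq_sum_range (fun k => k) d, Finset.sum_range_id]

/-- the space `𝔸_d` of skew-symmetric matrices is the orthogonal (for the
Frobenius inner product) direct sum of the `S_d`-invariant subspaces `𝔸_{d,1}` and
`𝔸_{d,2}`, of dimensions `d − 1` and `(d−1)(d−2)/2` respectively. -/
theorem skew_decomposition (d : ℕ) (hd : 2 ≤ d) :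
    Ad1 d ⊔ Ad2 d = skewSpace d ∧
    Disjoint (Ad1 d) (Ad2 d) ∧
    (∀ A ∈ Ad1 d, ∀ B ∈ Ad2 d, Matrix.trace (Aᵀ * B) = 0) ∧
    (∀ σ : Equiv.Perm (Fin d), ∀ A ∈ Ad1 d, permMat σ * A * (permMat σ)ᵀ ∈ Ad1 d) ∧
    (∀ σ : Equiv.Perm (Fin d), ∀ A ∈ Ad2 d, permMat σ * A * (permMat σ)ᵀ ∈ Ad2 d) ∧
    Module.finrank ℝ (Ad1 d) = d - 1 ∧
    Module.finrank ℝ (Ad2 d) = (d - 1) * (d - 2) / 2 := by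
  have hd1 : 1 ≤ d := le_trans one_le_two hd
  have hdR : (d : ℝ) ≠ 0 := by positivity
  -- Ad1 consists of skew matrices
  have hA1skew : Ad1 d ≤ skewSpace d := by
    rintro A ⟨x, hx0, hx⟩
    show Aᵀ = -A
    ext i j
    simp only [Matrix.transpose_apply, Matrix.neg_apply, hx i j, hx j i]
    ring
  have hA2skew : Ad2 d ≤ skewSpace d := fun A hA => hA.1
  -- sup
  have hsup : Ad1 d ⊔ Ad2 d = skewSpace d := by
    apply le_antisymm (sup_le hA1skew hA2skew)
    intro A hA
    have hA' : Aᵀ = -A := hA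
    set x : Fin d → ℝ := fun i => (∑ j, A i j) / d with hxdef
    have hsumsum : ∑ i, ∑ j, A i j = 0 := by
      have h1 : ∑ i, ∑ j, A i j = ∑ i, ∑ j, A j i := Finset.sum_comm
      have h2 : ∑ i, ∑ j, A j i = -∑ i, ∑ j, A i j := by
        rw [← Finset.sum_neg_distrib]
        refine Finset.sum_congr rfl fun i _ => ?_
        rw [← Finset.sum_neg_distrib]
        exact Finset.sum_congr rfl fun j _ => skew_apply hA' i j
      have := h1.trans h2
      linarith
    have hx0 : ∑ i, x i = 0 := by
      simp only [hxdef, ← Finset.sum_div, hsumsum, zero_div]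
    have hrow : ∀ i, (d : ℝ) * x i = ∑ j, A i j := by
      intro i; simp only [hxdef]; field_simp
    set B : Matrix (Fin d) (Fin d) ℝ := Matrix.of fun i j => x i - x j with hBdef
    have hBskew : Bᵀ = -B := by
      ext i j; simp only [hBdef, Matrix.transpose_apply, Matrix.neg_apply, Matrix.of_apply]; ring
    refine Submodule.mem_sup.mpr ⟨B, ⟨x, hx0, fun i j => rfl⟩, A - B, ⟨?_, ?_⟩, by abel⟩
    · rw [Matrix.transpose_sub, hA', hBskew]; abel
    · intro i
      have hBsum : ∑ j, B i j = (d : ℝ) * x i - ∑ j, x j := by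
        simp only [hBdef, Matrix.of_apply]
        rw [Finset.sum_sub_distrib, Finset.sum_const, Finset.card_univ, Fintype.card_fin,
          nsmul_eq_mul]
      have hsplit : ∑ j, (A - B) i j = (∑ j, A i j) - ∑ j, B i j := by
        simp [Matrix.sub_apply, Finset.sum_sub_distrib]
      rw [hsplit, hBsum, hx0]
      have := hrow i
      linarith
  -- disjoint
  have hdisj : Disjoint (Ad1 d) (Ad2 d) := by
    rw [Submodule.disjoint_def]
    rintro A ⟨x, hx0, hx⟩ ⟨-, hrow⟩
    have hxz : ∀ i, x i = 0 := by
      intro i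
      have h := hrow i
      rw [Finset.sum_congr rfl fun j _ => hx i j, Finset.sum_sub_distrib, Finset.sum_const,
        hx0] at h
      simp only [Finset.card_univ, Fintype.card_fin, nsmul_eq_mul, sub_zero] at h
      exact (mul_eq_zero.mp h).resolve_left hdR
    ext i j
    simp [hx i j, hxz]
  refine ⟨hsup, hdisj, ?_, ?_, ?_, finrank_Ad1 d hd1, ?_⟩
  · -- orthogonality
    rintro A ⟨x, hx0, hx⟩ B hB
    have hrow := hB.2
    have hcol := fun j => Ad2_col_sum hB j
    have : Matrix.trace (Aᵀ * B) = ∑ i, ∑ k, (x k - x i) * B k i := by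
      simp only [Matrix.trace, Matrix.diag, Matrix.mul_apply, Matrix.transpose_apply]
      exact Finset.sum_congr rfl fun i _ => Finset.sum_congr rfl fun k _ => by rw [hx k i]
    rw [this]
    have expand : ∀ i, ∑ k, (x k - x i) * B k i
        = (∑ k, x k * B k i) - x i * ∑ k, B k i := by
      intro i
      rw [Finset.mul_sum, ← Finset.sum_sub_distrib]
      exact Finset.sum_congr rfl fun k _ => by ring
    simp only [expand]
    rw [Finset.sum_sub_distrib]
    have t1 : ∑ i, ∑ k, x k * B k i = 0 := by
      rw [Finset.sum_comm]
      refine Finset.sum_eq_zero fun k _ => ?_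
      rw [← Finset.mul_sum, hrow k, mul_zero]
    have t2 : ∑ i, x i * ∑ k, B k i = 0 :=
      Finset.sum_eq_zero fun i _ => by rw [hcol i, mul_zero]
    rw [t1, t2, sub_zero]
  · -- S_d-invariance of Ad1
    rintro σ A ⟨x, hx0, hx⟩
    refine ⟨fun i => x (σ⁻¹ i), by rw [Equiv.sum_comp σ⁻¹ x]; exact hx0, fun i j => ?_⟩
    rw [permMat_conj_apply, hx]
  · -- S_d-invariance of Ad2
    rintro σ A ⟨hA1, hA2⟩
    constructor
    · ext i j
      simp only [Matrix.transpose_apply, Matrix.neg_apply]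
      rw [permMat_conj_apply, permMat_conj_apply]
      exact skew_apply hA1 _ _
    · intro i
      have : ∑ j, (permMat σ * A * (permMat σ)ᵀ) i j = ∑ j, A (σ⁻¹ i) (σ⁻¹ j) :=
        Finset.sum_congr rfl fun j _ => permMat_conj_apply σ A i j
      rw [this, Equiv.sum_comp σ⁻¹ (fun j => A (σ⁻¹ i) j)]
      exact hA2 (σ⁻¹ i)
  · -- dimension of Ad2
    have key := Submodule.finrank_sup_add_finrank_inf_eq (Ad1 d) (Ad2 d)
    rw [hsup, disjoint_iff.mp hdisj, finrank_bot, finrank_skew d, finrank_Ad1 d hd1,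
      add_zero] at key
    obtain ⟨k, rfl⟩ : ∃ k, d = k + 2 := ⟨d - 2, by omega⟩
    have e1 : k + 2 - 1 = k + 1 := rfl
    have e2 : k + 2 - 2 = k := rfl
    rw [e1, e2]
    rw [e1] at key
    set m := (k + 1) * k with hm
    have h2 : (k + 2) * (k + 1) / 2 = (k + 1) + m / 2 := by
      have h1 : (k + 2) * (k + 1) = 2 * (k + 1) + m := by rw [hm]; ring
      rw [h1, Nat.mul_add_div (by norm_num)]
    rw [h2] at key
    omega
end
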